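/- arXiv:1903.09601 — 2 statements merged into one kernel-verified Lean document; each statement's English description precedes it below -/
import Mathlib

section
/- Let μ = ∑_{j∈𝒜} p_j (f_j)_*μ be a self-affine measure with f_j = A_j + b_j affine contractions. For any finite stopping set 𝒲 of words (every infinite word has exactly one prefix in 𝒲) and any ξ ∈ ℝ^d, |μ̂(ξ)|² ≤ ∬ ∑_{w∈𝒲} p_w e^{-2πi ⟨A_w^⊤ ξ, x−y⟩} dμ(x) dμ(y), where A_w = A_{w_1}⋯A_{w_n} and μ̂(ξ) = ∫ e^{-2πi ⟨ξ,x⟩} dμ(x). -/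
/-!
With `e_η(x) = exp(-2πi⟪η, x⟫)`, iterating the self-affinity relation along the stopping set gives
`μ̂(ξ) = ∑_{w ∈ 𝒲} p_w ∫ e_ξ(f_w x) dμ(x)`, and since `f_w x = A_w x + c_w` the `w`-th integral has
modulus `|μ̂(A_wᵀ ξ)|`. The weights `p_w` sum to `1`, so Jensen's inequality for `t ↦ t²` gives
`|μ̂(ξ)|² ≤ ∑ p_w |μ̂(A_wᵀ ξ)|²`, and `|μ̂(η)|² = ∬ e_η(x - y) dμ(x) dμ(y)`.
-/

open MeasureTheory Metric
open scoped RealInnerProductSpace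

open Finset ComplexConjugate

section StoppingSet

variable {ι : Type*}

def List.IsPrefixOfSeq (w : List ι) (ω : ℕ → ι) : Prop :=
  ∀ i : Fin w.length, w.get i = ω i

theorem List.isPrefixOfSeq_cons {j : ι} {t : List ι} {ω : ℕ → ι} :
    (j :: t).IsPrefixOfSeq ω ↔ j = ω 0 ∧ t.IsPrefixOfSeq (fun n => ω (n + 1)) :=
  Fin.forall_fin_succ

def IsStoppingSet (W : Finset (List ι)) : Prop :=
  ∀ ω : ℕ → ι, ∃! w, w ∈ W ∧ w.IsPrefixOfSeq ω

noncomputable def leftQuotient (W : Finset (List ι)) (j : ι) : Finset (List ι) :=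
  W.preimage (List.cons j) List.cons_injective.injOn

@[simp]
theorem mem_leftQuotient {W : Finset (List ι)} {j : ι} {t : List ι} :
    t ∈ leftQuotient W j ↔ j :: t ∈ W :=
  mem_preimage

theorem sum_eq_sum_sum_leftQuotient [Fintype ι] {M : Type*} [AddCommMonoid M]
    {W : Finset (List ι)} (hnil : [] ∉ W) (F : List ι → M) :
    ∑ w ∈ W, F w = ∑ j, ∑ t ∈ leftQuotient W j, F (j :: t) := by
  rw [sum_sigma']
  refine (sum_bij (fun x _ => x.1 :: x.2) (fun x hx => by simpa using hx) ?_ ?_ fun _ _ => rfl).symm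
  · rintro ⟨j, t⟩ - ⟨j', t'⟩ - h
    obtain ⟨rfl, rfl⟩ := List.cons_eq_cons.1 h
    rfl
  · rintro (_ | ⟨j, t⟩) hw
    · exact absurd hw hnil
    · exact ⟨⟨j, t⟩, by simpa using hw, rfl⟩

namespace IsStoppingSet

variable {W : Finset (List ι)}

theorem nonempty [Nonempty ι] (hW : IsStoppingSet W) : W.Nonempty :=
  let ⟨a⟩ := ‹Nonempty ι›
  let ⟨w, ⟨hw, _⟩, _⟩ := hW fun _ => a
  ⟨w, hw⟩

theorem eq_singleton_nil [Nonempty ι] (hW : IsStoppingSet W) (hnil : [] ∈ W) : W = {[]} := by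
  refine eq_singleton_iff_unique_mem.2 ⟨hnil, fun w hw => ?_⟩
  obtain ⟨a⟩ := ‹Nonempty ι›
  obtain ⟨v, -, hv⟩ := hW fun n => w.getD n a
  exact (hv w ⟨hw, fun i => by simp⟩).trans (hv [] ⟨hnil, fun i => i.elim0⟩).symm

protected theorem leftQuotient (hW : IsStoppingSet W) (hnil : [] ∉ W) (j : ι) :
    IsStoppingSet (leftQuotient W j) := by
  intro ω
  obtain ⟨w, ⟨hwW, hwω⟩, hw⟩ := hW fun n => Nat.casesOn n j ω
  obtain _ | ⟨a, t⟩ := w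
  · exact absurd hwW hnil
  obtain ⟨rfl, htω⟩ := List.isPrefixOfSeq_cons.1 hwω
  refine ⟨t, ⟨mem_leftQuotient.2 hwW, htω⟩, fun t' ⟨ht'W, ht'ω⟩ => ?_⟩
  exact List.cons_injective
    (hw (a :: t') ⟨mem_leftQuotient.1 ht'W, List.isPrefixOfSeq_cons.2 ⟨rfl, ht'ω⟩⟩)

end IsStoppingSet

end StoppingSet

section SelfSimilar

variable {ι X : Type*}

def wordMap (f : ι → X → X) (w : List ι) : X → X :=
  w.foldr (fun j g => f j ∘ g) id

@[simp] theorem wordMap_nil (f : ι → X → X) : wordMap f [] = id := rfl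

@[simp] theorem wordMap_cons (f : ι → X → X) (j : ι) (t : List ι) (x : X) :
    wordMap f (j :: t) x = f j (wordMap f t x) := rfl

theorem wordMap_eq_prod_add {ι R M : Type*} [Semiring R] [TopologicalSpace M] [AddCommMonoid M]
    [Module R M] (A : ι → M →L[R] M) (b : ι → M) {f : ι → M → M}
    (hf : ∀ j x, f j x = A j x + b j) (w : List ι) :
    ∃ c, ∀ x, wordMap f w x = (w.map A).prod x + c := by
  induction w with
  | nil => exact ⟨0, fun x => by simp⟩
  | cons j t ih =>
    obtain ⟨c, hc⟩ := ih
    exact ⟨A j c + b j, fun x => by simp [hc, hf, add_assoc]⟩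

theorem List.prod_map_nonneg {p : ι → ℝ} (hp : ∀ j, 0 ≤ p j) (w : List ι) :
    0 ≤ (w.map p).prod :=
  List.prod_nonneg (by simpa using fun j _ => hp j)

variable [MeasurableSpace X] [Fintype ι] {F : Type*} [NormedAddCommGroup F]
  {μ : Measure X} {p : ι → ℝ} {f : ι → X → X} {g : X → F}

theorem integrable_map_of_eq_sum_map (hμ : μ = ∑ j, ENNReal.ofReal (p j) • μ.map (f j))
    (hp : ∀ j, 0 < p j) (hg : Integrable g μ) (j : ι) : Integrable g (μ.map (f j)) := by
  refine (integrable_smul_measure (by simpa using hp j) ENNReal.ofReal_ne_top).1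
    (hg.mono_measure ?_)
  exact (single_le_sum (fun _ _ => Measure.zero_le _) (mem_univ j)).trans_eq hμ.symm

theorem MeasureTheory.Integrable.comp_of_eq_sum_map
    (hμ : μ = ∑ j, ENNReal.ofReal (p j) • μ.map (f j))
    (hp : ∀ j, 0 < p j) (hf : ∀ j, Measurable (f j)) (hg : Integrable g μ) (j : ι) :
    Integrable (fun x => g (f j x)) μ :=
  have hgj := integrable_map_of_eq_sum_map hμ hp hg j
  (integrable_map_measure hgj.aestronglyMeasurable (hf j).aemeasurable).1 hgj

variable [NormedSpace ℝ F]

theorem integral_eq_sum_integral_comp (hμ : μ = ∑ j, ENNReal.ofReal (p j) • μ.map (f j))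
    (hp : ∀ j, 0 < p j) (hf : ∀ j, Measurable (f j)) (hg : Integrable g μ) :
    ∫ x, g x ∂μ = ∑ j, p j • ∫ x, g (f j x) ∂μ := by
  have hgj := integrable_map_of_eq_sum_map hμ hp hg
  conv_lhs => rw [hμ]
  rw [integral_finsetSum_measure fun j _ => (hgj j).smul_measure ENNReal.ofReal_ne_top]
  refine sum_congr rfl fun j _ => ?_
  rw [integral_smul_measure, ENNReal.toReal_ofReal (hp j).le,
    integral_map (hf j).aemeasurable (hgj j).aestronglyMeasurable]

theorem integral_eq_sum_stoppingSet [Nonempty ι]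
    (hμ : μ = ∑ j, ENNReal.ofReal (p j) • μ.map (f j))
    (hp : ∀ j, 0 < p j) (hf : ∀ j, Measurable (f j)) {W : Finset (List ι)} (hW : IsStoppingSet W)
    (hg : Integrable g μ) :
    ∫ x, g x ∂μ = ∑ w ∈ W, (w.map p).prod • ∫ x, g (wordMap f w x) ∂μ := by
  obtain ⟨n, hn⟩ : ∃ n, ∀ w ∈ W, w.length ≤ n := ⟨_, fun _ => le_sup⟩
  induction n generalizing W g with
  | zero =>
    obtain ⟨w, hw⟩ := hW.nonempty
    rw [List.eq_nil_of_length_eq_zero (Nat.le_zero.1 (hn w hw))] at hw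
    simp [hW.eq_singleton_nil hw]
  | succ n ih =>
    by_cases hnil : [] ∈ W
    · simp [hW.eq_singleton_nil hnil]
    rw [sum_eq_sum_sum_leftQuotient hnil, integral_eq_sum_integral_comp hμ hp hf hg]
    refine sum_congr rfl fun j _ => ?_
    rw [ih (hW.leftQuotient hnil j) (hg.comp_of_eq_sum_map hμ hp hf j)
      fun t ht => Nat.le_of_succ_le_succ (hn _ (mem_leftQuotient.1 ht)), smul_sum]
    simp [smul_smul]

theorem sum_prod_map_eq_one_of_isStoppingSet [IsProbabilityMeasure μ] [Nonempty ι]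
    (hμ : μ = ∑ j, ENNReal.ofReal (p j) • μ.map (f j))
    (hp : ∀ j, 0 < p j) (hf : ∀ j, Measurable (f j)) {W : Finset (List ι)} (hW : IsStoppingSet W) :
    ∑ w ∈ W, (w.map p).prod = 1 := by
  simpa using (integral_eq_sum_stoppingSet hμ hp hf hW (integrable_const (1 : ℝ))).symm

end SelfSimilar

section Fourier

variable {E : Type*} [NormedAddCommGroup E] [InnerProductSpace ℝ E]

noncomputable def fourierExp (η x : E) : ℂ :=
  Complex.exp (-(2 * Real.pi * Complex.I) * (⟪η, x⟫ : ℝ))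

theorem norm_fourierExp (η x : E) : ‖fourierExp η x‖ = 1 := by
  rw [fourierExp, Complex.norm_exp]
  simp

theorem continuous_fourierExp (η : E) : Continuous (fourierExp η) := by
  unfold fourierExp
  fun_prop

theorem fourierExp_add (η x y : E) : fourierExp η (x + y) = fourierExp η x * fourierExp η y := by
  simp only [fourierExp, ← Complex.exp_add, inner_add_right]
  push_cast
  ring_nf

theorem fourierExp_sub (η x y : E) :
    fourierExp η (x - y) = fourierExp η x * conj (fourierExp η y) := by
  simp only [fourierExp, ← Complex.exp_conj, ← Complex.exp_add, inner_sub_right, map_mul, map_neg,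
    Complex.conj_I, Complex.conj_ofReal, map_ofNat]
  push_cast
  ring_nf

theorem fourierExp_adjoint [CompleteSpace E] (η : E) (T : E →L[ℝ] E) (x : E) :
    fourierExp (ContinuousLinearMap.adjoint T η) x = fourierExp η (T x) := by
  rw [fourierExp, fourierExp, ContinuousLinearMap.adjoint_inner_left]

variable [MeasurableSpace E] (μ : Measure E)

theorem integrable_fourierExp [BorelSpace E] [IsFiniteMeasure μ] (η : E) :
    Integrable (fourierExp η) μ :=
  .of_bound (continuous_fourierExp η).aestronglyMeasurable 1
    (.of_forall fun x => (norm_fourierExp η x).le)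

theorem integral_fourierExp_affine [CompleteSpace E] (η : E) (T : E →L[ℝ] E) (c : E) :
    ∫ x, fourierExp η (T x + c) ∂μ =
      fourierExp η c * ∫ x, fourierExp (ContinuousLinearMap.adjoint T η) x ∂μ := by
  simp only [fourierExp_add, fourierExp_adjoint, mul_comm _ (fourierExp η c), integral_const_mul]

theorem integral_fourierExp_sub (η x : E) :
    ∫ y, fourierExp η (x - y) ∂μ = fourierExp η x * conj (∫ y, fourierExp η y ∂μ) := by
  simp only [fourierExp_sub, integral_const_mul, integral_conj]

theorem integral_integral_sum_fourierExp_sub [BorelSpace E] [IsFiniteMeasure μ] {ι : Type*}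
    (s : Finset ι) (c : ι → ℂ) (η : ι → E) :
    ∫ x, ∫ y, ∑ i ∈ s, c i * fourierExp (η i) (x - y) ∂μ ∂μ =
      ∑ i ∈ s, c i * Complex.normSq (∫ x, fourierExp (η i) x ∂μ) := by
  have h_inner (x : E) : ∫ y, ∑ i ∈ s, c i * fourierExp (η i) (x - y) ∂μ =
      ∑ i ∈ s, c i * fourierExp (η i) x * conj (∫ y, fourierExp (η i) y ∂μ) := by
    refine (integral_finsetSum (f := fun i y => c i * fourierExp (η i) (x - y)) _
      fun i _ => .const_mul (.of_bound
      ((continuous_fourierExp _).comp (continuous_sub_left x)).aestronglyMeasurable 1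
      (.of_forall fun y => (norm_fourierExp _ _).le)) _).trans (sum_congr rfl fun i _ => ?_)
    rw [integral_const_mul, integral_fourierExp_sub, mul_assoc]
  simp only [h_inner]
  rw [integral_finsetSum _ fun i _ => ((integrable_fourierExp μ (η i)).const_mul _).mul_const _]
  simp only [integral_mul_const, integral_const_mul, mul_assoc, Complex.mul_conj]

end Fourier

section SelfAffine

variable {ι E : Type*} [NormedAddCommGroup E] [InnerProductSpace ℝ E] [MeasurableSpace E]
  [BorelSpace E] {μ : Measure E} {p : ι → ℝ} {A : ι → E →L[ℝ] E} {b : ι → E} {f : ι → E → E}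
  {W : Finset (List ι)}

theorem measurable_of_eq_clm_add (hf : ∀ j x, f j x = A j x + b j) (j : ι) :
    Measurable (f j) := by
  rw [funext (hf j)]
  fun_prop

variable [Fintype ι] [Nonempty ι] [CompleteSpace E]

theorem norm_integral_fourierExp_le_sum_stoppingSet [IsFiniteMeasure μ]
    (hμ : μ = ∑ j, ENNReal.ofReal (p j) • μ.map (f j)) (hp : ∀ j, 0 < p j)
    (hf : ∀ j x, f j x = A j x + b j) (hW : IsStoppingSet W) (ξ : E) :
    ‖∫ x, fourierExp ξ x ∂μ‖ ≤ ∑ w ∈ W, (w.map p).prod *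
      ‖∫ x, fourierExp (ContinuousLinearMap.adjoint (w.map A).prod ξ) x ∂μ‖ := by
  rw [integral_eq_sum_stoppingSet hμ hp (measurable_of_eq_clm_add hf) hW
    (integrable_fourierExp μ ξ)]
  refine (norm_sum_le _ _).trans_eq (sum_congr rfl fun w _ => ?_)
  obtain ⟨c, hc⟩ := wordMap_eq_prod_add A b hf w
  simp only [hc, integral_fourierExp_affine, norm_smul, norm_mul, norm_fourierExp, one_mul,
    Real.norm_of_nonneg (w.prod_map_nonneg fun j => (hp j).le)]

theorem norm_integral_fourierExp_sq_le_sum_stoppingSet [IsProbabilityMeasure μ]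
    (hμ : μ = ∑ j, ENNReal.ofReal (p j) • μ.map (f j)) (hp : ∀ j, 0 < p j)
    (hf : ∀ j x, f j x = A j x + b j) (hW : IsStoppingSet W) (ξ : E) :
    ‖∫ x, fourierExp ξ x ∂μ‖ ^ 2 ≤ ∑ w ∈ W, (w.map p).prod *
      ‖∫ x, fourierExp (ContinuousLinearMap.adjoint (w.map A).prod ξ) x ∂μ‖ ^ 2 := by
  calc ‖∫ x, fourierExp ξ x ∂μ‖ ^ 2
      ≤ (∑ w ∈ W, (w.map p).prod *
          ‖∫ x, fourierExp (ContinuousLinearMap.adjoint (w.map A).prod ξ) x ∂μ‖) ^ 2 := by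
        gcongr
        exact norm_integral_fourierExp_le_sum_stoppingSet hμ hp hf hW ξ
    _ ≤ _ := (convexOn_pow 2).map_sum_le (fun w _ => w.prod_map_nonneg fun j => (hp j).le)
        (sum_prod_map_eq_one_of_isStoppingSet hμ hp (measurable_of_eq_clm_add hf) hW)
        fun _ _ => norm_nonneg _

end SelfAffine

theorem stmt1_general {d : ℕ} {𝒜 : Type*} [Fintype 𝒜]
    (A : 𝒜 → (EuclideanSpace ℝ (Fin d)) ≃L[ℝ] (EuclideanSpace ℝ (Fin d)))
    (b : 𝒜 → EuclideanSpace ℝ (Fin d)) (p : 𝒜 → ℝ)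
    (hp0 : ∀ j, 0 < p j)
    (f : 𝒜 → EuclideanSpace ℝ (Fin d) → EuclideanSpace ℝ (Fin d))
    (hf : ∀ j x, f j x = A j x + b j)
    (μ : Measure (EuclideanSpace ℝ (Fin d))) [IsProbabilityMeasure μ]
    (hμ : μ = ∑ j, ENNReal.ofReal (p j) • μ.map (f j))
    (𝒲 : Finset (List 𝒜))
    (h𝒲 : ∀ ω : ℕ → 𝒜, ∃! w, w ∈ 𝒲 ∧ ∀ i : Fin w.length, w.get i = ω i)
    (ξ : EuclideanSpace ℝ (Fin d)) :
    ‖∫ x, Complex.exp (-(2 * Real.pi * Complex.I) * (⟪ξ, x⟫ : ℝ)) ∂μ‖ ^ 2 ≤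
      (∫ x, ∫ y, ∑ w ∈ 𝒲, ((w.map p).prod : ℂ) *
          Complex.exp (-(2 * Real.pi * Complex.I) *
            ((⟪ContinuousLinearMap.adjoint
                ((w.map fun j => ((A j : EuclideanSpace ℝ (Fin d) →L[ℝ]
                    EuclideanSpace ℝ (Fin d)))).prod) ξ, x - y⟫ : ℝ)))
        ∂μ ∂μ).re := by
  have : Nonempty 𝒜 := by
    by_contra h
    rw [not_nonempty_iff] at h
    exact IsProbabilityMeasure.ne_zero μ (by simpa using hμ)
  let A' := fun j => (A j : EuclideanSpace ℝ (Fin d) →L[ℝ] EuclideanSpace ℝ (Fin d))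
  show ‖∫ x, fourierExp ξ x ∂μ‖ ^ 2 ≤ (∫ x, ∫ y, ∑ w ∈ 𝒲, ((w.map p).prod : ℂ) *
    fourierExp (ContinuousLinearMap.adjoint (w.map A').prod ξ) (x - y) ∂μ ∂μ).re
  rw [integral_integral_sum_fourierExp_sub]
  refine (norm_integral_fourierExp_sq_le_sum_stoppingSet hμ hp0 (A := A') hf h𝒲 ξ).trans_eq ?_
  simp only [Complex.re_sum, ← Complex.ofReal_mul, Complex.ofReal_re, Complex.normSq_eq_norm_sq]

/-- Cauchy–Schwarz bound for the Fourier transform of a self-affine measure over a stopping set. -/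
theorem stmt1 {d : ℕ} {𝒜 : Type*} [Fintype 𝒜]
    (A : 𝒜 → (EuclideanSpace ℝ (Fin d)) ≃L[ℝ] (EuclideanSpace ℝ (Fin d)))
    (b : 𝒜 → EuclideanSpace ℝ (Fin d)) (p : 𝒜 → ℝ)
    (hA : ∀ j, ‖((A j : EuclideanSpace ℝ (Fin d) →L[ℝ] EuclideanSpace ℝ (Fin d)))‖ < 1)
    (hp0 : ∀ j, 0 < p j) (hp1 : ∀ j, p j < 1) (hpsum : ∑ j, p j = 1)
    (f : 𝒜 → EuclideanSpace ℝ (Fin d) → EuclideanSpace ℝ (Fin d))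
    (hf : ∀ j x, f j x = A j x + b j)
    (μ : Measure (EuclideanSpace ℝ (Fin d))) [IsProbabilityMeasure μ]
    (K : Set (EuclideanSpace ℝ (Fin d))) (hK : IsCompact K) (hKμ : μ Kᶜ = 0)
    (hμ : μ = ∑ j, ENNReal.ofReal (p j) • μ.map (f j))
    (𝒲 : Finset (List 𝒜))
    (h𝒲 : ∀ ω : ℕ → 𝒜, ∃! w, w ∈ 𝒲 ∧ ∀ i : Fin w.length, w.get i = ω i)
    (ξ : EuclideanSpace ℝ (Fin d)) :
    ‖∫ x, Complex.exp (-(2 * Real.pi * Complex.I) * (⟪ξ, x⟫ : ℝ)) ∂μ‖ ^ 2 ≤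
      (∫ x, ∫ y, ∑ w ∈ 𝒲, ((w.map p).prod : ℂ) *
          Complex.exp (-(2 * Real.pi * Complex.I) *
            ((⟪ContinuousLinearMap.adjoint
                ((w.map fun j => ((A j : EuclideanSpace ℝ (Fin d) →L[ℝ]
                    EuclideanSpace ℝ (Fin d)))).prod) ξ, x - y⟫ : ℝ)))
        ∂μ ∂μ).re :=
  stmt1_general A b p hp0 f hf μ hμ 𝒲 h𝒲 ξ
end

section
/- Let μ be a Borel probability measure on the torus 𝕋^d = ℝ^d/ℤ^d whose Fourier coefficients satisfy μ̂(m) → 0 as |m| → ∞ (a Rajchman measure), and let F = supp μ. Suppose F ⊆ 𝕋^d and x ∉ F. Then for the one-dimensional case d = 1 the symmetric partial sums of the Fourier series of μ converge to 0 at x: lim_{N→∞} ∑_{|m| ≤ N} μ̂(m) e^{2πi m x} = 0. -/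
/-!
Write `e(t) = exp(2πi t)`. For `y ≠ x`, with `z = e(x - y)`, the Dirichlet kernel is
`D_N(x - y) = (z^(N+1) - z^(-N)) / (z - 1)`, and `1 / (z - 1)` is bounded on the support of `μ`,
which stays away from `x`. So the partial sum `∫ D_N(x - y) dμ(y)` is a unimodular combination of
the Fourier–Stieltjes coefficients at `N + 1` and `-N` of `g μ`, where `g(y) = 1 / (e(x - y) - 1)`.
These tend to zero because the Rajchman property passes from `μ` to `g μ` for every `g ∈ L¹(μ)`:
shifting indices gives it for trigonometric polynomials, and these are dense in `L¹(μ)`.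
-/

open MeasureTheory Filter Topology

theorem sub_one_mul_sum_Icc_zpow {K : Type*} [Field K] {z : K} (hz : z ≠ 0) (N : ℕ) :
    (z - 1) * ∑ m ∈ Finset.Icc (-(N : ℤ)) N, z ^ m = z ^ ((N : ℤ) + 1) - z ^ (-(N : ℤ)) := by
  induction N with
  | zero => simp [mul_comm]
  | succ n ih =>
    have hIcc : Finset.Icc (-((n + 1 : ℕ) : ℤ)) (n + 1 : ℕ)
        = insert (-((n + 1 : ℕ) : ℤ)) (insert ((n + 1 : ℕ) : ℤ) (Finset.Icc (-(n : ℤ)) n)) := by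
      ext m; simp only [Finset.mem_Icc, Finset.mem_insert]; omega
    rw [hIcc, Finset.sum_insert (by simp only [Finset.mem_insert, Finset.mem_Icc]; omega),
      Finset.sum_insert (by simp only [Finset.mem_Icc]; omega)]
    have hup : z ^ ((n : ℤ) + 1 + 1) = z ^ ((n : ℤ) + 1) * z := zpow_add_one₀ hz _
    have hdown : z ^ (-(n : ℤ)) = z ^ (-((n : ℤ) + 1)) * z := by
      rw [← zpow_add_one₀ hz]; ring_nf
    push_cast
    linear_combination ih - hup - hdown

theorem tendsto_nhds_zero_of_forall_approx {ι E : Type*} [SeminormedAddCommGroup E]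
    {l : Filter ι} {F : ι → E}
    (h : ∀ ε > 0, ∃ G : ι → E, Tendsto G l (𝓝 0) ∧ ∀ i, ‖F i - G i‖ ≤ ε) :
    Tendsto F l (𝓝 0) := by
  rw [Metric.tendsto_nhds]
  intro ε hε
  obtain ⟨G, hG, hFG⟩ := h (ε / 2) (half_pos hε)
  filter_upwards [Metric.tendsto_nhds.1 hG (ε / 2) (half_pos hε)] with i hi
  rw [dist_zero_right] at hi ⊢
  calc ‖F i‖ ≤ ‖F i - G i‖ + ‖G i‖ := norm_le_norm_sub_add _ _
    _ < ε := by linarith [hFG i]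

theorem ContinuousMap.integrable_of_compactSpace {X E : Type*} [TopologicalSpace X]
    [CompactSpace X] [MeasurableSpace X] [OpensMeasurableSpace X] [NormedAddCommGroup E]
    {μ : Measure X} [IsFiniteMeasure μ] (p : C(X, E)) : Integrable p μ :=
  p.continuous.integrable_of_hasCompactSupport (.of_compactSpace _)

namespace AddCircle

variable {T : ℝ} {μ : Measure (AddCircle T)}

theorem fourier_apply_eq_zpow (m : ℤ) (t : AddCircle T) :
    (fourier m t : ℂ) = (toCircle t : ℂ) ^ m := by
  rw [fourier_apply, toCircle_zsmul, Circle.coe_zpow]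

theorem fourier_apply_sub (m : ℤ) (x y : AddCircle T) :
    (fourier m (x - y) : ℂ) = fourier m x * fourier (-m) y := by
  rw [fourier_apply, fourier_apply, fourier_apply, smul_sub, sub_eq_add_neg, toCircle_add,
    Circle.coe_mul, neg_smul]

theorem fourier_one_apply_eq_one_iff [hT : Fact (0 < T)] {t : AddCircle T} :
    (fourier 1 t : ℂ) = 1 ↔ t = 0 := by
  rw [fourier_one, ← Circle.coe_one, Circle.coe_inj, ← toCircle_zero,
    (injective_toCircle hT.out.ne').eq_iff]

theorem sum_Icc_fourier_apply_eq {t : AddCircle T} {w : ℂ} (hw : (fourier 1 t - 1) * w = 1)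
    (N : ℕ) : ∑ m ∈ Finset.Icc (-(N : ℤ)) N, (fourier m t : ℂ)
      = w * (fourier ((N : ℤ) + 1) t - fourier (-(N : ℤ)) t) := by
  simp only [fourier_apply_eq_zpow, zpow_one] at hw ⊢
  linear_combination w * sub_one_mul_sum_Icc_zpow (Circle.coe_ne_zero _) N
    - (∑ m ∈ Finset.Icc (-(N : ℤ)) N, (toCircle t : ℂ) ^ m) * hw

/-- The `n`-th Fourier–Stieltjes coefficient `(f μ)^(n)` of the complex measure `f μ`. -/
noncomputable def fourierStieltjesCoeff (μ : Measure (AddCircle T)) (f : AddCircle T → ℂ)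
    (n : ℤ) : ℂ :=
  ∫ y, f y * fourier (-n) y ∂μ

theorem norm_fourier_apply (n : ℤ) (y : AddCircle T) : ‖(fourier n y : ℂ)‖ = 1 :=
  Circle.norm_coe _

theorem integrable_mul_fourier {f : AddCircle T → ℂ} (hf : Integrable f μ) (n : ℤ) :
    Integrable (fun y => f y * fourier n y) μ :=
  hf.mul_bdd (fourier n).continuous.aestronglyMeasurable
    (ae_of_all _ fun y => (norm_fourier_apply n y).le)

theorem norm_fourierStieltjesCoeff_sub_le {f g : AddCircle T → ℂ} (hf : Integrable f μ)
    (hg : Integrable g μ) (n : ℤ) :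
    ‖fourierStieltjesCoeff μ f n - fourierStieltjesCoeff μ g n‖ ≤ ∫ y, ‖f y - g y‖ ∂μ := by
  rw [fourierStieltjesCoeff, fourierStieltjesCoeff,
    ← integral_sub (integrable_mul_fourier hf _) (integrable_mul_fourier hg _)]
  refine (norm_integral_le_integral_norm _).trans_eq (integral_congr_ae (ae_of_all _ fun y => ?_))
  dsimp only
  rw [← sub_mul, norm_mul, norm_fourier_apply, mul_one]

theorem tendsto_fourierStieltjesCoeff_of_mem_span [Fact (0 < T)] [IsFiniteMeasure μ]
    (hμ : Tendsto (fourierStieltjesCoeff μ 1) cofinite (𝓝 0)) {p : C(AddCircle T, ℂ)}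
    (hp : p ∈ Submodule.span ℂ (Set.range fourier)) :
    Tendsto (fourierStieltjesCoeff μ p) cofinite (𝓝 0) := by
  induction hp using Submodule.span_induction with
  | mem q hq =>
    obtain ⟨k, rfl⟩ := hq
    have hshift : fourierStieltjesCoeff μ (fourier k)
        = fun n => fourierStieltjesCoeff μ 1 (n - k) := by
      ext n
      simp only [fourierStieltjesCoeff, Pi.one_apply, one_mul]
      congr 1 with y
      rw [← fourier_add]
      ring_nf
    rw [hshift]
    exact hμ.comp (sub_left_injective.tendsto_cofinite)
  | zero =>
    have hzero : fourierStieltjesCoeff μ ⇑(0 : C(AddCircle T, ℂ)) = 0 := by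
      ext n
      simp [fourierStieltjesCoeff]
    rw [hzero]
    exact tendsto_const_nhds
  | add q r _ _ hq hr =>
    have hadd : fourierStieltjesCoeff μ ⇑(q + r)
        = fun n => fourierStieltjesCoeff μ q n + fourierStieltjesCoeff μ r n := by
      ext n
      simp only [fourierStieltjesCoeff, ContinuousMap.coe_add, Pi.add_apply, add_mul]
      exact integral_add (integrable_mul_fourier (ContinuousMap.integrable_of_compactSpace q) _)
        (integrable_mul_fourier (ContinuousMap.integrable_of_compactSpace r) _)
    rw [hadd]
    simpa only [add_zero] using hq.add hr
  | smul a q _ hq =>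
    have hsmul :
        fourierStieltjesCoeff μ ⇑(a • q) = fun n => a * fourierStieltjesCoeff μ q n := by
      ext n
      simp only [fourierStieltjesCoeff, ContinuousMap.coe_smul, Pi.smul_apply, smul_eq_mul,
        mul_assoc, integral_const_mul]
    rw [hsmul]
    simpa only [mul_zero] using hq.const_mul a

theorem exists_mem_span_fourier_integral_norm_sub_le [Fact (0 < T)] [IsFiniteMeasure μ]
    {f : AddCircle T → ℂ} (hf : Integrable f μ) {ε : ℝ} (hε : 0 < ε) :
    ∃ p ∈ Submodule.span ℂ (Set.range fourier), ∫ y, ‖f y - p y‖ ∂μ ≤ ε := by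
  obtain ⟨h, hfh, hh⟩ := hf.exists_boundedContinuous_integral_sub_le (half_pos hε)
  set δ := ε / 2 / (μ.real Set.univ + 1)
  have hδ : 0 < δ := by positivity
  have hdense :
      h.toContinuousMap ∈ closure (Submodule.span ℂ (Set.range (@fourier T)) : Set _) := by
    rw [← Submodule.topologicalClosure_coe, span_fourier_closure_eq_top]
    trivial
  obtain ⟨p, hp, hhp⟩ := Metric.mem_closure_iff.1 hdense δ hδ
  refine ⟨p, hp, ?_⟩
  have hpμ : Integrable p μ := ContinuousMap.integrable_of_compactSpace p
  have hhp' : ∫ y, ‖h y - p y‖ ∂μ ≤ ε / 2 := by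
    have hbound : ∀ y, ‖h y - p y‖ ≤ δ := fun y => by
      rw [← dist_eq_norm]
      exact (ContinuousMap.dist_apply_le_dist (f := h.toContinuousMap) (g := p) y).trans hhp.le
    calc ∫ y, ‖h y - p y‖ ∂μ ≤ ∫ _, δ ∂μ :=
          integral_mono (hh.sub hpμ).norm (integrable_const δ) hbound
      _ = δ * μ.real Set.univ := by rw [integral_const, smul_eq_mul, mul_comm]
      _ ≤ δ * (μ.real Set.univ + 1) := by gcongr; linarith
      _ = ε / 2 := div_mul_cancel₀ _ (by positivity)
  calc ∫ y, ‖f y - p y‖ ∂μ ≤ ∫ y, (‖f y - h y‖ + ‖h y - p y‖) ∂μ :=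
        integral_mono (hf.sub hpμ).norm ((hf.sub hh).norm.add (hh.sub hpμ).norm)
          fun y => norm_sub_le_norm_sub_add_norm_sub _ _ _
    _ = ∫ y, ‖f y - h y‖ ∂μ + ∫ y, ‖h y - p y‖ ∂μ :=
        integral_add (hf.sub hh).norm (hh.sub hpμ).norm
    _ ≤ ε := by linarith

theorem tendsto_fourierStieltjesCoeff_of_integrable [Fact (0 < T)] [IsFiniteMeasure μ]
    (hμ : Tendsto (fourierStieltjesCoeff μ 1) cofinite (𝓝 0)) {f : AddCircle T → ℂ}
    (hf : Integrable f μ) : Tendsto (fourierStieltjesCoeff μ f) cofinite (𝓝 0) := by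
  refine tendsto_nhds_zero_of_forall_approx fun ε hε => ?_
  obtain ⟨p, hp, hfp⟩ := exists_mem_span_fourier_integral_norm_sub_le hf hε
  exact ⟨_, tendsto_fourierStieltjesCoeff_of_mem_span hμ hp,
    fun n =>
      (norm_fourierStieltjesCoeff_sub_le hf (ContinuousMap.integrable_of_compactSpace p) n).trans hfp⟩

theorem tendsto_fourier_apply_mul {l : Filter ℤ} {F : ℤ → ℂ} (hF : Tendsto F l (𝓝 0))
    (x : AddCircle T) : Tendsto (fun n => fourier n x * F n) l (𝓝 0) := by
  rw [tendsto_zero_iff_norm_tendsto_zero] at hF ⊢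
  simpa only [norm_mul, norm_fourier_apply, one_mul] using hF

theorem sum_Icc_fourierStieltjesCoeff_one_mul_fourier [Fact (0 < T)] [IsFiniteMeasure μ]
    {x : AddCircle T} {g : AddCircle T → ℂ} (hg : Integrable g μ)
    (hgx : ∀ᵐ y ∂μ, (fourier 1 (x - y) - 1) * g y = 1) (N : ℕ) :
    ∑ m ∈ Finset.Icc (-(N : ℤ)) N, fourierStieltjesCoeff μ 1 m * fourier m x
      = fourier ((N : ℤ) + 1) x * fourierStieltjesCoeff μ g ((N : ℤ) + 1)
        - fourier (-(N : ℤ)) x * fourierStieltjesCoeff μ g (-(N : ℤ)) := by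
  have hterm : ∀ m : ℤ, fourierStieltjesCoeff μ 1 m * fourier m x
      = ∫ y, (fourier m (x - y) : ℂ) ∂μ := fun m => by
    simp only [fourierStieltjesCoeff, Pi.one_apply, one_mul, fourier_apply_sub,
      ← integral_mul_const]
    simp only [mul_comm]
  calc ∑ m ∈ Finset.Icc (-(N : ℤ)) N, fourierStieltjesCoeff μ 1 m * fourier m x
      = ∫ y, ∑ m ∈ Finset.Icc (-(N : ℤ)) N, (fourier m (x - y) : ℂ) ∂μ := by
        simp only [hterm]
        exact (integral_finsetSum _ fun m _ => ContinuousMap.integrable_of_compactSpace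
          ((fourier m).comp ⟨fun y => x - y, by fun_prop⟩)).symm
    _ = ∫ y, g y * (fourier ((N : ℤ) + 1) (x - y) - fourier (-(N : ℤ)) (x - y)) ∂μ :=
        integral_congr_ae (hgx.mono fun y hy => sum_Icc_fourier_apply_eq hy N)
    _ = ∫ y, (fourier ((N : ℤ) + 1) x * (g y * fourier (-((N : ℤ) + 1)) y)
          - fourier (-(N : ℤ)) x * (g y * fourier (-(-(N : ℤ))) y)) ∂μ := by
        congr 1 with y
        rw [fourier_apply_sub, fourier_apply_sub]
        ring
    _ = _ := by
        rw [integral_sub ((integrable_mul_fourier hg _).const_mul _)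
          ((integrable_mul_fourier hg _).const_mul _), integral_const_mul, integral_const_mul]
        rfl

theorem exists_integrable_inv_fourier_sub_one [Fact (0 < T)] [IsFiniteMeasure μ]
    {x : AddCircle T} {U : Set (AddCircle T)} (hU : U ∈ 𝓝 x) (hUμ : μ U = 0) :
    ∃ g : AddCircle T → ℂ, Integrable g μ ∧ ∀ᵐ y ∂μ, (fourier 1 (x - y) - 1) * g y = 1 := by
  set K := (interior U)ᶜ
  have hK : IsCompact K := isOpen_interior.isClosed_compl.isCompact
  have hxK : x ∉ K := fun h => h (mem_interior_iff_mem_nhds.2 hU)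
  have hKμ : ∀ᵐ y ∂μ, y ∈ K := by
    rw [ae_iff]
    simpa [K] using measure_mono_null interior_subset hUμ
  have hne : ∀ y ∈ K, (fourier 1 (x - y) : ℂ) - 1 ≠ 0 := fun y hy h => hxK <| by
    rwa [sub_eq_zero.1 (fourier_one_apply_eq_one_iff.1 (sub_eq_zero.1 h))]
  refine ⟨K.indicator fun y => ((fourier 1 (x - y) : ℂ) - 1)⁻¹,
    (integrable_indicator_iff hK.measurableSet).2
      (ContinuousOn.integrableOn_compact hK (ContinuousOn.inv₀ (by fun_prop) hne)),
    hKμ.mono fun y hy => ?_⟩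
  simp only [Set.indicator_of_mem hy, mul_inv_cancel₀ (hne y hy)]

end AddCircle

open AddCircle in
/-- Menshov localisation for Rajchman measures on the circle: if the Fourier coefficients of a
probability measure `μ` on `𝕋 = ℝ/ℤ` tend to `0` and `x` lies outside the support of `μ`, then
the symmetric partial sums of the Fourier series of `μ` converge to `0` at `x`. -/
theorem stmt19 (μ : Measure UnitAddCircle) [IsProbabilityMeasure μ]
    (c : ℤ → ℂ) (hc : ∀ m : ℤ, c m = ∫ x, fourier (-m) x ∂μ)
    (hRajchman : Tendsto c cofinite (nhds 0))
    (x : UnitAddCircle) (U : Set UnitAddCircle) (hU : U ∈ nhds x) (hUμ : μ U = 0) :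
    Tendsto (fun N : ℕ => ∑ m ∈ Finset.Icc (-(N:ℤ)) (N:ℤ), c m * fourier m x)
      atTop (nhds 0) := by
  have hc' : c = fourierStieltjesCoeff μ 1 := funext fun m => by
    simp [hc, fourierStieltjesCoeff]
  subst hc'
  obtain ⟨g, hg, hgx⟩ := exists_integrable_inv_fourier_sub_one hU hUμ
  have hcoeff := tendsto_fourier_apply_mul
    (tendsto_fourierStieltjesCoeff_of_integrable hRajchman hg) x
  have hsucc : Tendsto (fun N : ℕ => (N : ℤ) + 1) atTop cofinite := by
    rw [← Nat.cofinite_eq_atTop]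
    exact Function.Injective.tendsto_cofinite fun a b h => by simpa using h
  have hneg : Tendsto (fun N : ℕ => -(N : ℤ)) atTop cofinite := by
    rw [← Nat.cofinite_eq_atTop]
    exact Function.Injective.tendsto_cofinite fun a b h => by simpa using h
  simp only [sum_Icc_fourierStieltjesCoeff_one_mul_fourier hg hgx]
  simpa using (hcoeff.comp hsucc).sub (hcoeff.comp hneg)
end
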